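/- arXiv:2510.04877 — 5 statements merged into one kernel-verified Lean document; each statement's English description precedes it below -/
import Mathlib

section
/- Let P and Q be orthogonal projections on a finite-dimensional complex inner product space and let Ω be a positive semidefinite Hermitian operator. Then |Tr(Q Ω P)| ≤ ‖PQ‖_∞ · (Tr(QΩ))^{1/2} · (Tr(PΩ))^{1/2}, where ‖·‖_∞ is the operator norm. -/
/-!
Diagonalise `Ω = ∑ μᵢ |bᵢ⟩⟨bᵢ|` with `μᵢ ≥ 0`. By cyclicity `Tr(QΩP) = Tr(PQΩ) = ∑ μᵢ ⟪bᵢ, PQ bᵢ⟫`,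
and since `P` and `Q` are idempotent with `P` self-adjoint, `⟪bᵢ, PQ bᵢ⟫ = ⟪P bᵢ, PQ (Q bᵢ)⟫`,
which is at most `‖PQ‖ ‖P bᵢ‖ ‖Q bᵢ‖` in norm. Likewise `Tr(QΩ) = ∑ μᵢ ‖Q bᵢ‖²` and
`Tr(PΩ) = ∑ μᵢ ‖P bᵢ‖²`, so the claim is the Cauchy–Schwarz inequality with weights `μᵢ`.
-/

open scoped InnerProductSpace

theorem Real.sum_mul_mul_le_sqrt_mul_sqrt {ι : Type*} (s : Finset ι) {w : ι → ℝ}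
    (hw : ∀ i ∈ s, 0 ≤ w i) (f g : ι → ℝ) :
    ∑ i ∈ s, w i * f i * g i ≤ √(∑ i ∈ s, w i * f i ^ 2) * √(∑ i ∈ s, w i * g i ^ 2) := by
  have hsq (h : ι → ℝ) : ∑ i ∈ s, (√(w i) * h i) ^ 2 = ∑ i ∈ s, w i * h i ^ 2 :=
    Finset.sum_congr rfl fun i hi => by rw [mul_pow, Real.sq_sqrt (hw i hi)]
  calc ∑ i ∈ s, w i * f i * g i = ∑ i ∈ s, (√(w i) * f i) * (√(w i) * g i) :=
        Finset.sum_congr rfl fun i hi => by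
          rw [mul_mul_mul_comm, Real.mul_self_sqrt (hw i hi), mul_assoc]
    _ ≤ √(∑ i ∈ s, (√(w i) * f i) ^ 2) * √(∑ i ∈ s, (√(w i) * g i) ^ 2) :=
        Real.sum_mul_le_sqrt_mul_sqrt s _ _
    _ = √(∑ i ∈ s, w i * f i ^ 2) * √(∑ i ∈ s, w i * g i ^ 2) := by rw [hsq, hsq]

namespace LinearMap.IsSymmetric

variable {𝕜 E : Type*} [RCLike 𝕜] [NormedAddCommGroup E] [InnerProductSpace 𝕜 E]
  [FiniteDimensional 𝕜 E] {n : ℕ} {Ω : E →ₗ[𝕜] E}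

theorem trace_comp_eq_sum_eigenvalues_mul_inner (hΩ : Ω.IsSymmetric)
    (hn : Module.finrank 𝕜 E = n) (T : E →ₗ[𝕜] E) :
    trace 𝕜 E (T ∘ₗ Ω) = ∑ i, (hΩ.eigenvalues hn i : 𝕜) *
      ⟪hΩ.eigenvectorBasis hn i, T (hΩ.eigenvectorBasis hn i)⟫_𝕜 := by
  rw [trace_eq_sum_inner _ (hΩ.eigenvectorBasis hn)]
  refine Finset.sum_congr rfl fun i _ => ?_
  rw [comp_apply, hΩ.apply_eigenvectorBasis, map_smul, inner_smul_right]

end LinearMap.IsSymmetric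

namespace IsStarProjection

open ContinuousLinearMap

variable {𝕜 E : Type*} [RCLike 𝕜] [NormedAddCommGroup E] [InnerProductSpace 𝕜 E]
  [CompleteSpace E] {P Q : E →L[𝕜] E}

theorem inner_apply_self (hP : IsStarProjection P) (x : E) :
    ⟪x, P x⟫_𝕜 = ((‖P x‖ ^ 2 : ℝ) : 𝕜) := by
  have hPP : P (P x) = P x := DFunLike.congr_fun hP.isIdempotentElem x
  have hsym : ⟪P x, P x⟫_𝕜 = ⟪x, P (P x)⟫_𝕜 := hP.isSelfAdjoint.isSymmetric x (P x)
  rw [← hPP, ← hsym, hPP, inner_self_eq_norm_sq_to_K, RCLike.ofReal_pow]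

theorem norm_inner_comp_apply_le (hP : IsStarProjection P) (hQ : IsIdempotentElem Q) (x : E) :
    ‖⟪x, (P ∘L Q) x⟫_𝕜‖ ≤ ‖P ∘L Q‖ * ‖P x‖ * ‖Q x‖ := by
  have hPP : P (P (Q x)) = P (Q x) := DFunLike.congr_fun hP.isIdempotentElem (Q x)
  have hQQ : Q (Q x) = Q x := DFunLike.congr_fun hQ x
  have hsym : ⟪P x, P (Q x)⟫_𝕜 = ⟪x, P (P (Q x))⟫_𝕜 := hP.isSelfAdjoint.isSymmetric x (P (Q x))
  have hsandwich : ⟪x, (P ∘L Q) x⟫_𝕜 = ⟪P x, (P ∘L Q) (Q x)⟫_𝕜 := by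
    rw [comp_apply, comp_apply, hQQ, hsym, hPP]
  calc ‖⟪x, (P ∘L Q) x⟫_𝕜‖ ≤ ‖P x‖ * ‖(P ∘L Q) (Q x)‖ :=
        hsandwich ▸ norm_inner_le_norm _ _
    _ ≤ ‖P x‖ * (‖P ∘L Q‖ * ‖Q x‖) := by gcongr; exact (P ∘L Q).le_opNorm _
    _ = ‖P ∘L Q‖ * ‖P x‖ * ‖Q x‖ := by ring

theorem trace_comp_eq_sum_eigenvalues_mul_norm_sq [FiniteDimensional 𝕜 E] {n : ℕ}
    {Ω : E →ₗ[𝕜] E} (hP : IsStarProjection P) (hΩ : Ω.IsSymmetric)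
    (hn : Module.finrank 𝕜 E = n) :
    LinearMap.trace 𝕜 E ((P : E →ₗ[𝕜] E) ∘ₗ Ω) =
      ((∑ i, hΩ.eigenvalues hn i * ‖P (hΩ.eigenvectorBasis hn i)‖ ^ 2 : ℝ) : 𝕜) := by
  rw [hΩ.trace_comp_eq_sum_eigenvalues_mul_inner hn]
  simp only [coe_coe, hP.inner_apply_self, RCLike.ofReal_sum, RCLike.ofReal_mul]

end IsStarProjection

/-- Let `P` and `Q` be orthogonal projections on a finite-dimensional
complex inner product space and let `Ω` be a positive semidefinite Hermitian operator.
Then `|Tr(QΩP)| ≤ ‖PQ‖ · (Tr QΩ)^{1/2} · (Tr PΩ)^{1/2}`. -/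
theorem stmt0 {E : Type*} [NormedAddCommGroup E] [InnerProductSpace ℂ E]
    [FiniteDimensional ℂ E]
    (P Q Ω : E →L[ℂ] E)
    (hP : P ∘L P = P) (hPadj : ContinuousLinearMap.adjoint P = P)
    (hQ : Q ∘L Q = Q) (hQadj : ContinuousLinearMap.adjoint Q = Q)
    (hΩ : Ω.IsPositive) :
    ‖LinearMap.trace ℂ E ((Q ∘L Ω ∘L P : E →L[ℂ] E) : E →ₗ[ℂ] E)‖ ≤
      ‖P ∘L Q‖ * Real.sqrt ((LinearMap.trace ℂ E ((Q ∘L Ω : E →L[ℂ] E) : E →ₗ[ℂ] E)).re) *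
        Real.sqrt ((LinearMap.trace ℂ E ((P ∘L Ω : E →L[ℂ] E) : E →ₗ[ℂ] E)).re) := by
  have hPproj : IsStarProjection P := ⟨hP, hPadj⟩
  have hQproj : IsStarProjection Q := ⟨hQ, hQadj⟩
  have hsym := hΩ.isSymmetric
  set b := hsym.eigenvectorBasis rfl
  set μ := hsym.eigenvalues rfl
  have hμ (i) : 0 ≤ μ i := hΩ.toLinearMap.nonneg_eigenvalues rfl i
  have hcyc : LinearMap.trace ℂ E ((Q ∘L Ω ∘L P : E →L[ℂ] E) : E →ₗ[ℂ] E) =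
      LinearMap.trace ℂ E (((P ∘L Q : E →L[ℂ] E) : E →ₗ[ℂ] E) ∘ₗ Ω) :=
    LinearMap.trace_comp_comm' (P : E →ₗ[ℂ] E) ((Q : E →ₗ[ℂ] E) ∘ₗ Ω)
  simp only [ContinuousLinearMap.toLinearMap_comp] at hcyc ⊢
  rw [hcyc, hsym.trace_comp_eq_sum_eigenvalues_mul_inner rfl,
    hQproj.trace_comp_eq_sum_eigenvalues_mul_norm_sq hsym rfl,
    hPproj.trace_comp_eq_sum_eigenvalues_mul_norm_sq hsym rfl]
  simp only [Complex.coe_algebraMap, Complex.ofReal_re]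
  calc _ ≤ ∑ i, μ i * (‖P ∘L Q‖ * ‖P (b i)‖ * ‖Q (b i)‖) := by
        refine norm_sum_le_of_le _ fun i _ => ?_
        rw [norm_mul, Complex.norm_real, Real.norm_of_nonneg (hμ i)]
        exact mul_le_mul_of_nonneg_left (hPproj.norm_inner_comp_apply_le hQ _) (hμ i)
    _ = ‖P ∘L Q‖ * ∑ i, μ i * ‖Q (b i)‖ * ‖P (b i)‖ := by
        rw [Finset.mul_sum]; congr 1; ext i; ring
    _ ≤ _ := by
        rw [mul_assoc]
        gcongr
        exact Real.sum_mul_mul_le_sqrt_mul_sqrt _ (fun i _ => hμ i) _ _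
end

section
/- For probability distributions p and q on a finite set, the Bhattacharyya coefficient BC(p,q) = Σᵢ √(pᵢ qᵢ) satisfies BC(p,q) ≤ exp(−‖p−q‖₁²/8), where ‖p−q‖₁ = Σᵢ |pᵢ − qᵢ|. -/
/-- For probability distributions `p, q` on a finite set, the
Bhattacharyya coefficient `BC(p,q) = ∑ √(pᵢ qᵢ)` satisfies
`BC(p,q) ≤ exp(−‖p−q‖₁² / 8)`. -/
theorem stmt1 {r : ℕ} (p q : Fin r → ℝ)
    (hp : ∀ i, 0 ≤ p i) (hq : ∀ i, 0 ≤ q i)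
    (hp1 : ∑ i, p i = 1) (hq1 : ∑ i, q i = 1) :
    ∑ i, Real.sqrt (p i * q i) ≤ Real.exp (-(∑ i, |p i - q i|) ^ 2 / 8) := by
  set S := ∑ i, Real.sqrt (p i * q i) with hS
  set L := ∑ i, |p i - q i| with hL
  have hsq : ∀ i, Real.sqrt (p i * q i) = Real.sqrt (p i) * Real.sqrt (q i) :=
    fun i => Real.sqrt_mul (hp i) _
  -- S ≤ 1
  have hS1 : S ≤ 1 := by
    calc S = ∑ i, Real.sqrt (p i) * Real.sqrt (q i) := by
            simp_rw [hS, hsq]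
      _ ≤ Real.sqrt (∑ i, p i) * Real.sqrt (∑ i, q i) :=
            Real.sum_sqrt_mul_sqrt_le _ hp hq
      _ = 1 := by rw [hp1, hq1]; simp
  -- Cauchy-Schwarz: L^2 ≤ (2 - 2S) * (2 + 2S)
  have key : L ^ 2 ≤ (2 - 2 * S) * (2 + 2 * S) := by
    have habs : ∀ i, |p i - q i| =
        |Real.sqrt (p i) - Real.sqrt (q i)| * (Real.sqrt (p i) + Real.sqrt (q i)) := by
      intro i
      rw [← abs_of_nonneg (by positivity : (0:ℝ) ≤ Real.sqrt (p i) + Real.sqrt (q i)),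
        ← abs_mul]
      congr 1
      have := Real.sq_sqrt (hp i)
      have := Real.sq_sqrt (hq i)
      ring_nf
      nlinarith [Real.sq_sqrt (hp i), Real.sq_sqrt (hq i)]
    have hcs := Finset.sum_mul_sq_le_sq_mul_sq Finset.univ
      (fun i => |Real.sqrt (p i) - Real.sqrt (q i)|)
      (fun i => Real.sqrt (p i) + Real.sqrt (q i))
    have h1 : ∑ i, |Real.sqrt (p i) - Real.sqrt (q i)| ^ 2 = 2 - 2 * S := by
      have : ∀ i, |Real.sqrt (p i) - Real.sqrt (q i)| ^ 2
          = p i + q i - 2 * (Real.sqrt (p i) * Real.sqrt (q i)) := by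
        intro i
        rw [sq_abs]
        have := Real.sq_sqrt (hp i); have := Real.sq_sqrt (hq i)
        ring_nf
        nlinarith
      simp_rw [this]
      rw [hS]
      simp_rw [hsq]
      rw [Finset.sum_sub_distrib, Finset.sum_add_distrib, hp1, hq1, ← Finset.mul_sum]
      ring
    have h2 : ∑ i, (Real.sqrt (p i) + Real.sqrt (q i)) ^ 2 = 2 + 2 * S := by
      have : ∀ i, (Real.sqrt (p i) + Real.sqrt (q i)) ^ 2
          = p i + q i + 2 * (Real.sqrt (p i) * Real.sqrt (q i)) := by
        intro i
        have := Real.sq_sqrt (hp i); have := Real.sq_sqrt (hq i)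
        ring_nf
        nlinarith
      simp_rw [this]
      rw [hS]
      simp_rw [hsq]
      rw [Finset.sum_add_distrib, Finset.sum_add_distrib, hp1, hq1, ← Finset.mul_sum]
      ring
    calc L ^ 2 = (∑ i, |Real.sqrt (p i) - Real.sqrt (q i)|
          * (Real.sqrt (p i) + Real.sqrt (q i))) ^ 2 := by
          rw [hL]; congr 1; exact Finset.sum_congr rfl fun i _ => habs i
      _ ≤ _ := hcs
      _ = (2 - 2 * S) * (2 + 2 * S) := by rw [h1, h2]
  have hmain : S ≤ 1 - L ^ 2 / 8 := by nlinarith [sq_nonneg (S - 1)]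
  have hexp := Real.add_one_le_exp (-L ^ 2 / 8)
  calc S ≤ 1 - L ^ 2 / 8 := hmain
    _ = -L ^ 2 / 8 + 1 := by ring
    _ ≤ Real.exp (-L ^ 2 / 8) := hexp
end

section
/- The Bhattacharyya coefficient is multiplicative with respect to multinomial distributions: if m_x^k denotes the multinomial distribution of k draws from a probability distribution x on a finite set (a distribution on tuples of counts λ with Σλᵢ = k), then BC(m_x^k, m_y^k) = BC(x,y)^k. -/
lemma sqrt_prod_aux {ι : Type*} (s : Finset ι) (f : ι → ℝ) (h : ∀ i ∈ s, 0 ≤ f i) :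
    Real.sqrt (∏ i ∈ s, f i) = ∏ i ∈ s, Real.sqrt (f i) := by
  induction s using Finset.cons_induction with
  | empty => simp
  | cons a s ha ih =>
    rw [Finset.prod_cons, Finset.prod_cons,
      Real.sqrt_mul (h a (Finset.mem_cons_self a s)),
      ih fun i hi => h i (Finset.mem_cons_of_mem hi)]

lemma sqrt_pow_aux (a : ℝ) (ha : 0 ≤ a) (m : ℕ) :
    Real.sqrt (a ^ m) = Real.sqrt a ^ m := by
  induction m with
  | zero => simp
  | succ m ih => rw [pow_succ, Real.sqrt_mul (pow_nonneg ha m), ih, pow_succ]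

/-- The Bhattacharyya coefficient is multiplicative with respect to
multinomial distributions: `BC(m_x^k, m_y^k) = BC(x,y)^k`, where for a tuple of counts
`λ` with `∑ λᵢ = k` the multinomial probability is
`m_x(λ) = (k!/(λ₁!⋯λₙ!)) ∏ xᵢ^{λᵢ}`. -/
theorem stmt3 {n k : ℕ} (x y : Fin n → ℝ)
    (hx : ∀ i, 0 ≤ x i) (hy : ∀ i, 0 ≤ y i)
    (hx1 : ∑ i, x i = 1) (hy1 : ∑ i, y i = 1) :
    ∑ l ∈ Finset.Nat.antidiagonalTuple n k,
      Real.sqrt (((Nat.multinomial Finset.univ l : ℝ) * ∏ i, x i ^ l i) *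
        ((Nat.multinomial Finset.univ l : ℝ) * ∏ i, y i ^ l i))
      = (∑ i, Real.sqrt (x i * y i)) ^ k := by
  rw [Finset.sum_pow_eq_sum_piAntidiag, Finset.piAntidiag_univ_fin_eq_antidiagonalTuple]
  refine Finset.sum_congr rfl fun l _ => ?_
  have h1 : ((Nat.multinomial Finset.univ l : ℝ) * ∏ i, x i ^ l i) *
      ((Nat.multinomial Finset.univ l : ℝ) * ∏ i, y i ^ l i)
      = (Nat.multinomial Finset.univ l : ℝ) ^ 2 * ∏ i, (x i * y i) ^ l i := by
    rw [mul_mul_mul_comm, ← sq, ← Finset.prod_mul_distrib]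
    exact congrArg _ (Finset.prod_congr rfl fun i _ => (mul_pow _ _ _).symm)
  rw [h1, Real.sqrt_mul (by positivity), Real.sqrt_sq (by positivity),
    sqrt_prod_aux _ _ fun i _ => pow_nonneg (mul_nonneg (hx i) (hy i)) _]
  exact congrArg _ (Finset.prod_congr rfl fun i _ => sqrt_pow_aux _ (mul_nonneg (hx i) (hy i)) _)
end

section
/- For a Young diagram λ with k boxes and at most n rows, lim_{n→∞} dim(V_λ^n)/n^k = 1/H_λ, where dim(V_λ^n) is the dimension of the irreducible U(n)-representation of highest weight λ and H_λ is the hook product of λ. -/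
open Finset Filter


private def hookR (l : ℕ → ℕ) (d₀ i j : ℕ) : ℕ :=
  (l i - j) + ((Finset.Ico (i + 1) d₀).filter (fun i' => j < l i')).card

private def aF (l : ℕ → ℕ) (d₀ i : ℕ) : ℕ := l i + (d₀ - 1 - i)

section
variable {l : ℕ → ℕ} {d₀ : ℕ}

private lemma a_strict (hl : Antitone l) {t t' : ℕ} (h : t < t') (h' : t' < d₀) :
    aF l d₀ t' < aF l d₀ t := by
  have := hl h.le
  unfold aF; omega

private lemma legw (i j : ℕ) :
    ((Ico (i + 1) d₀).filter (fun t => j < l t)).card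
      + ((Ico (i + 1) d₀).filter (fun t => l t ≤ j)).card = d₀ - 1 - i := by
  have h := Finset.card_filter_add_card_filter_not (s := Ico (i + 1) d₀)
    (fun t => j < l t)
  simp only [not_lt] at h
  rw [h, Nat.card_Ico]; omega

private lemma hook_key {i j : ℕ} (hj : j < l i) :
    hookR l d₀ i j + (j + ((Ico (i + 1) d₀).filter (fun t => l t ≤ j)).card)
      = aF l d₀ i := by
  have := legw (l := l) (d₀ := d₀) i j
  unfold hookR aF; omega

private lemma hook_ne (hl : Antitone l) {i j t : ℕ} (hj : j < l i)
    (ht : t ∈ Ico (i + 1) d₀) : hookR l d₀ i j ≠ aF l d₀ i - aF l d₀ t := by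
  simp only [mem_Ico] at ht
  intro he
  have hlt : aF l d₀ t < aF l d₀ i := a_strict hl (by omega : i < t) ht.2
  have hkey := hook_key (l := l) (d₀ := d₀) (i := i) hj
  -- from he and hkey : j + w = aF l d₀ t
  have hw : j + ((Ico (i + 1) d₀).filter (fun t => l t ≤ j)).card = aF l d₀ t := by
    omega
  by_cases hc : l t ≤ j
  · -- filter ⊇ Ico t d₀
    have hs : Ico t d₀ ⊆ (Ico (i + 1) d₀).filter (fun t' => l t' ≤ j) := by
      intro t' ht'
      simp only [mem_Ico] at ht'
      simp only [mem_filter, mem_Ico]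
      exact ⟨⟨by omega, ht'.2⟩, le_trans (hl ht'.1) hc⟩
    have hcard := Finset.card_le_card hs
    rw [Nat.card_Ico] at hcard
    have : aF l d₀ t = l t + (d₀ - 1 - t) := rfl
    omega
  · push_neg at hc
    have hs : (Ico (i + 1) d₀).filter (fun t' => l t' ≤ j) ⊆ Ico (t + 1) d₀ := by
      intro t' ht'
      simp only [mem_filter, mem_Ico] at ht'
      simp only [mem_Ico]
      refine ⟨?_, ht'.1.2⟩
      by_contra hh
      push_neg at hh
      have := hl (by omega : t' ≤ t)
      omega
    have hcard := Finset.card_le_card hs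
    rw [Nat.card_Ico] at hcard
    have : aF l d₀ t = l t + (d₀ - 1 - t) := rfl
    omega

private lemma prod_Icc_id (N : ℕ) : ∏ m ∈ Icc 1 N, m = N.factorial := by
  rw [← Finset.Ico_add_one_right_eq_Icc, Finset.prod_Ico_eq_prod_range]
  rw [← Finset.prod_range_add_one_eq_factorial]
  exact Finset.prod_congr rfl fun x _ => by omega

private lemma complement (hl : Antitone l) {i : ℕ} (hi : i < d₀) :
    (∏ j ∈ range (l i), hookR l d₀ i j)
      * (∏ t ∈ Ico (i + 1) d₀, (aF l d₀ i - aF l d₀ t))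
      = (aF l d₀ i).factorial := by
  classical
  set A : Finset ℕ := (range (l i)).image (hookR l d₀ i) with hA
  set B : Finset ℕ := (Ico (i + 1) d₀).image (fun t => aF l d₀ i - aF l d₀ t) with hB
  -- hook strictly decreasing in j
  have hmono : ∀ {j j' : ℕ}, j < j' → j' < l i → hookR l d₀ i j' < hookR l d₀ i j := by
    intro j j' hjj hj'
    have h1 : ((Ico (i + 1) d₀).filter (fun t => j' < l t)).card
        ≤ ((Ico (i + 1) d₀).filter (fun t => j < l t)).card := by
      apply Finset.card_le_card
      intro t ht
      simp only [mem_filter] at ht ⊢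
      exact ⟨ht.1, by omega⟩
    unfold hookR
    omega
  have hinjA : ∀ x ∈ range (l i), ∀ y ∈ range (l i),
      hookR l d₀ i x = hookR l d₀ i y → x = y := by
    intro x hx y hy hxy
    simp only [mem_range] at hx hy
    rcases lt_trichotomy x y with h | h | h
    · exact absurd hxy (hmono h hy).ne'
    · exact h
    · exact absurd hxy (hmono h hx).ne
  have hinjB : ∀ x ∈ Ico (i + 1) d₀, ∀ y ∈ Ico (i + 1) d₀,
      aF l d₀ i - aF l d₀ x = aF l d₀ i - aF l d₀ y → x = y := by
    intro x hx y hy hxy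
    simp only [mem_Ico] at hx hy
    have hax : aF l d₀ x < aF l d₀ i := a_strict hl (by omega) hx.2
    have hay : aF l d₀ y < aF l d₀ i := a_strict hl (by omega) hy.2
    rcases lt_trichotomy x y with h | h | h
    · have := a_strict hl h hy.2; omega
    · exact h
    · have := a_strict hl h hx.2; omega
  have hdisj : Disjoint A B := by
    rw [Finset.disjoint_left]
    intro m hmA hmB
    simp only [hA, hB, mem_image, mem_range] at hmA hmB
    obtain ⟨j, hj, hje⟩ := hmA
    obtain ⟨t, ht, hte⟩ := hmB
    exact hook_ne hl hj ht (hje.trans hte.symm)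
  have hsub : A ∪ B ⊆ Icc 1 (aF l d₀ i) := by
    intro m hm
    simp only [mem_union, hA, hB, mem_image, mem_range, mem_Icc] at hm ⊢
    rcases hm with ⟨j, hj, rfl⟩ | ⟨t, ht, rfl⟩
    · have := hook_key (l := l) (d₀ := d₀) (i := i) hj
      have : 1 ≤ l i - j := by omega
      unfold hookR aF
      have hcle : ((Ico (i + 1) d₀).filter (fun i' => j < l i')).card ≤ d₀ - 1 - i := by
        have := legw (l := l) (d₀ := d₀) i j; omega
      omega
    · simp only [mem_Ico] at ht
      have := a_strict hl (by omega : i < t) ht.2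
      omega
  have hcardA : A.card = l i := by
    rw [hA, Finset.card_image_of_injOn hinjA, Finset.card_range]
  have hcardB : B.card = d₀ - 1 - i := by
    rw [hB, Finset.card_image_of_injOn hinjB, Nat.card_Ico]; omega
  have hcardU : (A ∪ B).card = aF l d₀ i := by
    rw [Finset.card_union_of_disjoint hdisj, hcardA, hcardB]
    unfold aF; omega
  have heq : A ∪ B = Icc 1 (aF l d₀ i) := by
    apply Finset.eq_of_subset_of_card_le hsub
    rw [hcardU, Nat.card_Icc]; omega
  have := prod_Icc_id (aF l d₀ i)
  rw [← this, ← heq, Finset.prod_union hdisj, hA, hB,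
    Finset.prod_image hinjA, Finset.prod_image hinjB]
end


private lemma factExt (m : ℕ) : ∀ L : ℕ,
    m.factorial * ∏ j ∈ range L, (m + 1 + j) = (m + L).factorial := by
  intro L
  induction L with
  | zero => simp
  | succ L ih =>
    rw [Finset.prod_range_succ, ← mul_assoc, ih]
    have : m + (L + 1) = (m + L) + 1 := by omega
    rw [this, Nat.factorial_succ]
    ring

private lemma rowDen {i n : ℕ} (h : i < n) :
    ∏ j ∈ Ico (i + 1) n, (j - i) = (n - 1 - i).factorial := by
  rw [Finset.prod_Ico_eq_prod_range]
  have h2 : n - (i + 1) = n - 1 - i := by omega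
  rw [h2, ← Finset.prod_range_add_one_eq_factorial]
  exact Finset.prod_congr rfl fun x _ => by omega

private lemma GEq {i n : ℕ} (L : ℕ) (h : i < n) :
    (∏ j ∈ range L, (n + j - i)) * (n - 1 - i).factorial = (L + (n - 1 - i)).factorial := by
  have : ∏ j ∈ range L, (n + j - i) = ∏ j ∈ range L, ((n - 1 - i) + 1 + j) :=
    Finset.prod_congr rfl fun x _ => by omega
  rw [this, mul_comm, factExt]
  congr 1; omega

section
variable {l : ℕ → ℕ} {d₀ : ℕ}

private lemma FACT' (hd : ∀ i, d₀ ≤ i → l i = 0) {i : ℕ} (hi : i < d₀) :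
    ∀ n, d₀ ≤ n → (∏ j ∈ Ico d₀ n, (l i + j - (i + l j))) * (aF l d₀ i).factorial
      = (l i + (n - 1 - i)).factorial := by
  intro n hn
  induction n, hn using Nat.le_induction with
  | base =>
    simp only [Finset.Ico_self, Finset.prod_empty, one_mul]
    unfold aF
    rfl
  | succ n hn ih =>
    rw [Finset.prod_Ico_succ_top hn]
    have h0 : l n = 0 := hd n hn
    rw [mul_assoc, mul_comm (l i + n - (i + l n)), ← mul_assoc, ih]
    have h1 : l i + (n + 1 - 1 - i) = (l i + (n - 1 - i)) + 1 := by omega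
    rw [h1, Nat.factorial_succ, mul_comm]
    congr 1
    omega
end

section
variable {l : ℕ → ℕ} {d₀ : ℕ}

private lemma ROW (hl : Antitone l) (hd : ∀ i, d₀ ≤ i → l i = 0)
    {i n : ℕ} (hi : i < d₀) (hn : d₀ ≤ n) :
    (∏ j ∈ Ico (i + 1) n, (l i + j - (i + l j))) * (∏ j ∈ range (l i), hookR l d₀ i j)
      = (∏ j ∈ Ico (i + 1) n, (j - i)) * (∏ j ∈ range (l i), (n + j - i)) := by
  have hin : i < n := lt_of_lt_of_le hi hn
  rw [← Finset.prod_Ico_consecutive (fun j => l i + j - (i + l j))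
    (show i + 1 ≤ d₀ by omega) hn]
  have h1 : ∏ j ∈ Ico (i + 1) d₀, (l i + j - (i + l j))
      = ∏ j ∈ Ico (i + 1) d₀, (aF l d₀ i - aF l d₀ j) := by
    refine Finset.prod_congr rfl fun j hj => ?_
    simp only [mem_Ico] at hj
    have := hl (show i ≤ j by omega)
    unfold aF; omega
  rw [h1]
  calc ((∏ j ∈ Ico (i + 1) d₀, (aF l d₀ i - aF l d₀ j)) * ∏ j ∈ Ico d₀ n, (l i + j - (i + l j)))
        * (∏ j ∈ range (l i), hookR l d₀ i j)
      = (∏ j ∈ Ico d₀ n, (l i + j - (i + l j))) * ((∏ j ∈ range (l i), hookR l d₀ i j)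
        * ∏ j ∈ Ico (i + 1) d₀, (aF l d₀ i - aF l d₀ j)) := by ring
    _ = (∏ j ∈ Ico d₀ n, (l i + j - (i + l j))) * (aF l d₀ i).factorial := by
        rw [complement hl hi]
    _ = (l i + (n - 1 - i)).factorial := FACT' hd hi n hn
    _ = (∏ j ∈ range (l i), (n + j - i)) * (n - 1 - i).factorial := (GEq (l i) hin).symm
    _ = (∏ j ∈ Ico (i + 1) n, (j - i)) * ∏ j ∈ range (l i), (n + j - i) := by
        rw [rowDen hin]; ring

private lemma MAIN_NAT (hl : Antitone l) (hd : ∀ i, d₀ ≤ i → l i = 0)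
    {n : ℕ} (hn : d₀ ≤ n) :
    (∏ i ∈ range n, ∏ j ∈ Ico (i + 1) n, (l i + j - (i + l j)))
      * (∏ i ∈ range d₀, ∏ j ∈ range (l i), hookR l d₀ i j)
      = (∏ i ∈ range n, ∏ j ∈ Ico (i + 1) n, (j - i))
      * ∏ i ∈ range d₀, ∏ j ∈ range (l i), (n + j - i) := by
  rw [← Finset.prod_range_mul_prod_Ico (fun i => ∏ j ∈ Ico (i + 1) n, (l i + j - (i + l j))) hn,
      ← Finset.prod_range_mul_prod_Ico (fun i => ∏ j ∈ Ico (i + 1) n, (j - i)) hn]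
  have htail : ∏ i ∈ Ico d₀ n, ∏ j ∈ Ico (i + 1) n, (l i + j - (i + l j))
      = ∏ i ∈ Ico d₀ n, ∏ j ∈ Ico (i + 1) n, (j - i) := by
    refine Finset.prod_congr rfl fun i hi => Finset.prod_congr rfl fun j hj => ?_
    simp only [mem_Ico] at hi hj
    rw [hd i hi.1, hd j (by omega)]
    omega
  rw [htail]
  rw [mul_right_comm, mul_right_comm (∏ i ∈ range d₀, ∏ j ∈ Ico (i+1) n, (j - i))]
  congr 1
  rw [← Finset.prod_mul_distrib, ← Finset.prod_mul_distrib]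
  exact Finset.prod_congr rfl fun i hi => ROW hl hd (mem_range.mp hi) hn
end

private lemma prodPairs (n : ℕ) (f : ℕ → ℕ → ℝ) :
    ∏ p ∈ (range n ×ˢ range n).filter (fun p => p.1 < p.2), f p.1 p.2
      = ∏ i ∈ range n, ∏ j ∈ Ico (i + 1) n, f i j := by
  rw [Finset.prod_filter, Finset.prod_product]
  refine Finset.prod_congr rfl fun i _ => ?_
  rw [← Finset.prod_filter]
  refine Finset.prod_congr ?_ fun j _ => rfl
  ext j
  simp only [mem_filter, mem_range, mem_Ico]
  omega

private lemma ratio_tendsto (c : ℝ) :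
    Tendsto (fun n : ℕ => ((n : ℝ) + c) / n) atTop (nhds 1) := by
  have h : Tendsto (fun n : ℕ => 1 + c / n) atTop (nhds (1 + 0)) :=
    tendsto_const_nhds.add (tendsto_const_div_atTop_nhds_zero_nat c)
  rw [add_zero] at h
  refine h.congr' ?_
  filter_upwards [eventually_ge_atTop 1] with n hn
  have : (n : ℝ) ≠ 0 := by positivity
  field_simp

/-- For a fixed Young diagram `λ` with `k` boxes,
`lim_{n→∞} dim(V_λⁿ)/nᵏ = 1/H_λ`, where `dim(V_λⁿ)` is the Weyl dimension of the
irreducible `U(n)`-representation of highest weight `λ` and `H_λ` is the hook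
product. Here `λ` is encoded as an antitone function `l : ℕ → ℕ` vanishing from row
`d₀` on. -/
theorem stmt18 (l : ℕ → ℕ) (hl : Antitone l) (d₀ k : ℕ)
    (hd : ∀ i, d₀ ≤ i → l i = 0) (hk : ∑ i ∈ Finset.range d₀, l i = k) :
    Filter.Tendsto
      (fun n : ℕ =>
        ((∏ p ∈ (Finset.range n ×ˢ Finset.range n).filter (fun p => p.1 < p.2),
              ((l p.1 : ℝ) - p.1 - (l p.2 : ℝ) + p.2)) /
          (∏ p ∈ (Finset.range n ×ˢ Finset.range n).filter (fun p => p.1 < p.2),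
              ((p.2 : ℝ) - p.1))) / (n : ℝ) ^ k)
      Filter.atTop
      (nhds (1 / ((∏ i ∈ Finset.range d₀, ∏ j ∈ Finset.range (l i),
        ((l i - j) + ((Finset.Ico (i + 1) d₀).filter (fun i' => j < l i')).card) : ℕ) : ℝ))) := by
  set H : ℕ := ∏ i ∈ range d₀, ∏ j ∈ range (l i), hookR l d₀ i j with hHdef
  have hHpos : 0 < H := by
    refine Finset.prod_pos fun i _ => Finset.prod_pos fun j hj => ?_
    simp only [mem_range] at hj
    unfold hookR
    omega
  -- the target value is 1 / H
  have htarget : (∏ i ∈ Finset.range d₀, ∏ j ∈ Finset.range (l i),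
      ((l i - j) + ((Finset.Ico (i + 1) d₀).filter (fun i' => j < l i')).card) : ℕ) = H := rfl
  rw [htarget]
  -- the auxiliary function
  have hmain : Tendsto (fun n : ℕ => (1 / (H : ℝ)) *
      ∏ i ∈ range d₀, ∏ j ∈ range (l i), (((n : ℝ) + j - i) / n)) atTop (nhds (1 / (H : ℝ))) := by
    have h1 : Tendsto (fun n : ℕ =>
        ∏ i ∈ range d₀, ∏ j ∈ range (l i), (((n : ℝ) + j - i) / n)) atTop (nhds 1) := by
      have := tendsto_finset_prod (f := fun (i : ℕ) (n : ℕ) =>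
          ∏ j ∈ range (l i), (((n : ℝ) + j - i) / n)) (x := atTop)
          (a := fun _ => 1) (range d₀) (fun i _ => ?_)
      · simpa using this
      · have := tendsto_finset_prod (f := fun (j : ℕ) (n : ℕ) => (((n : ℝ) + j - i) / n))
          (x := atTop) (a := fun _ => 1) (range (l i)) (fun j _ => ?_)
        · simpa using this
        · have := ratio_tendsto ((j : ℝ) - i)
          refine this.congr fun n => ?_
          ring_nf
    have := tendsto_const_nhds (x := (1 / (H : ℝ))) (f := atTop (α := ℕ)) |>.mul h1
    simpa using this
  refine Filter.Tendsto.congr' ?_ hmain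
  filter_upwards [eventually_ge_atTop d₀, eventually_ge_atTop 1] with n hnd hn1
  -- cast numerator and denominator to ℕ products
  rw [prodPairs n (fun i j => (l i : ℝ) - i - l j + j), prodPairs n (fun i j => (j : ℝ) - i)]
  set Nn : ℕ := ∏ i ∈ range n, ∏ j ∈ Ico (i + 1) n, (l i + j - (i + l j)) with hNn
  set Dn : ℕ := ∏ i ∈ range n, ∏ j ∈ Ico (i + 1) n, (j - i) with hDn
  set Gn : ℕ := ∏ i ∈ range d₀, ∏ j ∈ range (l i), (n + j - i) with hGn
  have hNum : ∏ i ∈ range n, ∏ j ∈ Ico (i + 1) n, ((l i : ℝ) - i - l j + j) = (Nn : ℝ) := by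
    rw [hNn]
    push_cast
    refine Finset.prod_congr rfl fun i _ => Finset.prod_congr rfl fun j hj => ?_
    simp only [mem_Ico] at hj
    have h1 : l j ≤ l i := hl (by omega)
    have h2 : i + l j ≤ l i + j := by omega
    rw [Nat.cast_sub h2]
    push_cast
    ring
  have hDen : ∏ i ∈ range n, ∏ j ∈ Ico (i + 1) n, ((j : ℝ) - i) = (Dn : ℝ) := by
    rw [hDn]
    push_cast
    refine Finset.prod_congr rfl fun i _ => Finset.prod_congr rfl fun j hj => ?_
    simp only [mem_Ico] at hj
    rw [Nat.cast_sub (by omega)]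
  have hGcast : ∏ i ∈ range d₀, ∏ j ∈ range (l i), ((n : ℝ) + j - i) = (Gn : ℝ) := by
    rw [hGn]
    push_cast
    refine Finset.prod_congr rfl fun i hi => Finset.prod_congr rfl fun j _ => ?_
    simp only [mem_range] at hi
    rw [Nat.cast_sub (by omega : i ≤ n + j)]
    push_cast
    ring
  have hDpos : 0 < Dn := by
    rw [hDn]
    refine Finset.prod_pos fun i _ => Finset.prod_pos fun j hj => ?_
    simp only [mem_Ico] at hj
    omega
  have hcast : (Nn : ℝ) * H = (Dn : ℝ) * Gn := by
    exact_mod_cast MAIN_NAT hl hd hnd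
  have hHne : (H : ℝ) ≠ 0 := Nat.cast_ne_zero.mpr hHpos.ne'
  have hDne : (Dn : ℝ) ≠ 0 := Nat.cast_ne_zero.mpr hDpos.ne'
  have hnne : (n : ℝ) ≠ 0 := by positivity
  have hprodratio : ∏ i ∈ range d₀, ∏ j ∈ range (l i), (((n : ℝ) + j - i) / n)
      = (Gn : ℝ) / (n : ℝ) ^ k := by
    have hden : ∏ i ∈ range d₀, ∏ j ∈ range (l i), (n : ℝ) = (n : ℝ) ^ k := by
      simp only [Finset.prod_const, Finset.card_range]
      rw [Finset.prod_pow_eq_pow_sum, hk]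
    rw [← hGcast, ← hden, ← Finset.prod_div_distrib]
    exact Finset.prod_congr rfl fun i _ => by rw [← Finset.prod_div_distrib]
  rw [hprodratio, hNum, hDen]
  have hdivs : (Nn : ℝ) / Dn = (Gn : ℝ) / H := by
    rw [div_eq_div_iff hDne hHne]
    linear_combination hcast
  rw [hdivs]
  ring
end

section
/- For x in the set of nonincreasing nonnegative eigenvalue lists with Σxᵢ = τ > 0 and λ a partition of k with at most n parts, the Schur–Weyl distribution SW_x^k(λ) := (k!/τᵏ) · s_λ(x)/H_λ satisfies SW_x^k(λ) ≤ (k+1)^{n(n−1)/2} · exp(−k · D(λ/k ‖ x/τ)), where D denotes the Kullback–Leibler divergence. -/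
open scoped Classical

/-- A semistandard Young tableau of shape `l` with entries in `Fin n`, encoded as a
function on an `n × k` grid: rows weakly increase, columns strictly increase, entries
outside the diagram pinned to the row index. -/
def IsSSYT {n k : ℕ} (l : Fin n → ℕ) (T : Fin n → Fin k → Fin n) : Prop :=
  (∀ (i : Fin n) (j j' : Fin k), j ≤ j' → (j' : ℕ) < l i → T i j ≤ T i j') ∧
  (∀ (i i' : Fin n) (j : Fin k), i < i' → (j : ℕ) < l i' → T i j < T i' j) ∧
  (∀ (i : Fin n) (j : Fin k), l i ≤ (j : ℕ) → T i j = i)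

/-- The Schur polynomial `s_l(x₁,…,xₙ)` over the reals. -/
noncomputable def schurR (n k : ℕ) (l : Fin n → ℕ) (x : Fin n → ℝ) : ℝ :=
  ∑ T : Fin n → Fin k → Fin n,
    if IsSSYT l T then
      ∏ i : Fin n, ∏ j ∈ Finset.univ.filter (fun j : Fin k => (j : ℕ) < l i), x (T i j)
    else 0

/-- The hook product `H_l` of a partition. -/
def hookProd (n : ℕ) (l : Fin n → ℕ) : ℕ :=
  ∏ i : Fin n, ∏ j ∈ Finset.range (l i),
    ((l i - j) + (Finset.univ.filter (fun i' : Fin n => i < i' ∧ j < l i')).card)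


open Finset Real
open scoped Nat

/-!
Row `i` of a semistandard tableau of shape `λ` only holds entries `≥ i`, so every monomial
of `s_λ(x)` is at most `∏ xᵢ^{λᵢ}`. A row is weakly increasing, hence determined by the
numbers of its entries below each `m`; these vanish for `m ≤ i`, so a tableau is determined
by `n(n-1)/2` numbers in `[0, k]`. With `H_λ ≥ ∏ λᵢ!` this bounds `SW_x^k(λ)` by
`(k+1)^{n(n-1)/2}` times the multinomial probability of the type `λ` under `x/τ`, and that
probability is at most `exp(-k D(λ/k ‖ x/τ))` because the multinomial probability of `λ` under
`λ/k` itself is at most `1`.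
-/

section MethodOfTypes

variable {ι : Type*} [Fintype ι]

theorem multinomial_mul_prod_div_pow_le_one (a : ι → ℕ) {k : ℕ} (hk : ∑ i, a i = k) :
    (Nat.multinomial univ a : ℝ) * ∏ i, ((a i : ℝ) / k) ^ a i ≤ 1 := by
  have hone : (∑ i, (a i : ℝ) / k) ^ k = 1 := by
    rw [← sum_div, ← Nat.cast_sum, hk]
    rcases Nat.eq_zero_or_pos k with rfl | hk0
    · simp
    · rw [div_self (by positivity), one_pow]
  rw [← hone, sum_pow_eq_sum_piAntidiag]
  exact single_le_sum
    (f := fun b => (Nat.multinomial univ b : ℝ) * ∏ i, ((a i : ℝ) / k) ^ b i)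
    (fun b _ => by positivity) (by simp [hk])

theorem pow_le_div_pow_mul_exp_neg_mul_log {a k : ℕ} (hak : a ≤ k) {p : ℝ} (hp : 0 ≤ p) :
    p ^ a ≤ ((a : ℝ) / k) ^ a * exp (-(a * log ((a / k) / p))) := by
  rcases Nat.eq_zero_or_pos a with rfl | ha
  · simp
  have hk : 0 < k := ha.trans_le hak
  have hq : 0 < (a : ℝ) / k := by positivity
  rcases hp.eq_or_lt with rfl | hp
  · rw [zero_pow ha.ne']
    positivity
  refine le_of_eq ?_
  rw [← Real.log_pow, exp_neg, exp_log (by positivity), ← inv_pow, ← mul_pow, inv_div,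
    mul_div_cancel₀ _ hq.ne']

theorem multinomial_mul_prod_pow_le_exp_neg_klDiv (a : ι → ℕ) {k : ℕ} (hk : ∑ i, a i = k)
    {p : ι → ℝ} (hp : ∀ i, 0 ≤ p i) :
    (Nat.multinomial univ a : ℝ) * ∏ i, p i ^ a i
      ≤ exp (-(k : ℝ) * ∑ i, ((a i : ℝ) / k) * log (((a i : ℝ) / k) / p i)) := by
  have hak : ∀ i, a i ≤ k := fun i =>
    hk ▸ single_le_sum (fun _ _ => Nat.zero_le _) (mem_univ i)
  have hexp : exp (-(k : ℝ) * ∑ i, ((a i : ℝ) / k) * log (((a i : ℝ) / k) / p i))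
      = ∏ i, exp (-(a i * log ((a i / k) / p i))) := by
    rw [mul_sum, exp_sum]
    refine prod_congr rfl fun i _ => congrArg exp ?_
    rcases Nat.eq_zero_or_pos k with rfl | hk0
    · simp [Nat.le_zero.1 (hak i)]
    · field_simp
  calc (Nat.multinomial univ a : ℝ) * ∏ i, p i ^ a i
      ≤ Nat.multinomial univ a
          * ∏ i, (((a i : ℝ) / k) ^ a i * exp (-(a i * log ((a i / k) / p i)))) := by
        refine mul_le_mul_of_nonneg_left (prod_le_prod (fun i _ => pow_nonneg (hp i) _)
          fun i _ => pow_le_div_pow_mul_exp_neg_mul_log (hak i) (hp i)) (Nat.cast_nonneg _)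
    _ = (Nat.multinomial univ a * ∏ i, ((a i : ℝ) / k) ^ a i)
          * ∏ i, exp (-(a i * log ((a i / k) / p i))) := by
        rw [prod_mul_distrib, mul_assoc]
    _ ≤ 1 * ∏ i, exp (-(a i * log ((a i / k) / p i))) := by
        gcongr
        exact multinomial_mul_prod_div_pow_le_one a hk
    _ = _ := by rw [one_mul, hexp]

end MethodOfTypes

theorem Fin.lt_iff_lt_card_filter_of_monotoneOn {α : Type*} [LinearOrder α] {k L : ℕ}
    {f : Fin k → α} (hf : MonotoneOn f {j | (j : ℕ) < L}) {j : Fin k} (hj : (j : ℕ) < L)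
    (m : α) : f j < m ↔ (j : ℕ) < #{j' : Fin k | (j' : ℕ) < L ∧ f j' < m} := by
  constructor
  · intro hjm
    have hsub : Iic j ⊆ ({j' : Fin k | (j' : ℕ) < L ∧ f j' < m} : Finset (Fin k)) := by
      intro j' hj'
      rw [mem_Iic] at hj'
      have hj'L : (j' : ℕ) < L := lt_of_le_of_lt hj' hj
      simpa [hj'L] using (hf hj'L hj hj').trans_lt hjm
    exact (Fin.card_Iic j ▸ card_le_card hsub : (j : ℕ) + 1 ≤ _)
  · intro hcard
    by_contra! hmj
    have hsub : ({j' : Fin k | (j' : ℕ) < L ∧ f j' < m} : Finset (Fin k)) ⊆ Iio j := by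
      intro j' hj'
      rw [mem_filter] at hj'
      rw [mem_Iio]
      by_contra! hjj'
      exact (hj'.2.2.trans_le hmj).not_ge (hf hj hj'.2.1 hjj')
    exact (card_le_card hsub).trans_eq (Fin.card_Iio j) |>.not_gt hcard

section Tableaux

variable {n k : ℕ} {l : Fin n → ℕ} {T T' : Fin n → Fin k → Fin n}

theorem IsSSYT.le_entry (hla : Antitone l) (hT : IsSSYT l T) {i : Fin n} {j : Fin k}
    (hj : (j : ℕ) < l i) : i ≤ T i j := by
  obtain ⟨i, hi⟩ := i
  induction i with
  | zero => exact Fin.mk_le_mk.2 (Nat.zero_le _)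
  | succ i ih =>
    have hlt : (⟨i, by omega⟩ : Fin n) < ⟨i + 1, hi⟩ := Fin.mk_lt_mk.2 (Nat.lt_succ_self i)
    have hprev := ih (by omega) (hj.trans_le (hla hlt.le))
    exact Fin.le_def.2 (Fin.le_def.1 hprev |>.trans_lt (hT.2.1 _ _ j hlt hj))

theorem IsSSYT.monotoneOn_row (hT : IsSSYT l T) (i : Fin n) :
    MonotoneOn (T i) {j | (j : ℕ) < l i} :=
  fun _ _ _ hj' hjj' => hT.1 i _ _ hjj' hj'

noncomputable def rowCountLT (l : Fin n → ℕ) (T : Fin n → Fin k → Fin n) (i m : Fin n) :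
    ℕ :=
  #{j : Fin k | (j : ℕ) < l i ∧ T i j < m}

theorem IsSSYT.rowCountLT_eq_zero (hla : Antitone l) (hT : IsSSYT l T) {i m : Fin n}
    (hm : m ≤ i) : rowCountLT l T i m = 0 :=
  card_eq_zero.2 <| filter_eq_empty_iff.2 fun _ _ ⟨hj, hlt⟩ =>
    (hlt.trans_le hm).not_ge (hT.le_entry hla hj)

theorem IsSSYT.eq_of_rowCountLT_eq (hla : Antitone l) (hT : IsSSYT l T) (hT' : IsSSYT l T')
    (h : ∀ i m, i < m → rowCountLT l T i m = rowCountLT l T' i m) : T = T' := by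
  funext i j
  by_cases hj : (j : ℕ) < l i
  · have hrow : ∀ m, rowCountLT l T i m = rowCountLT l T' i m := fun m =>
      (lt_or_ge i m).elim (h i m) fun hm => by
        rw [hT.rowCountLT_eq_zero hla hm, hT'.rowCountLT_eq_zero hla hm]
    refine eq_of_forall_gt_iff fun m => ?_
    rw [Fin.lt_iff_lt_card_filter_of_monotoneOn (hT.monotoneOn_row i) hj,
      Fin.lt_iff_lt_card_filter_of_monotoneOn (hT'.monotoneOn_row i) hj]
    exact iff_of_eq (congrArg _ (hrow m))
  · rw [hT.2.2 i j (not_lt.1 hj), hT'.2.2 i j (not_lt.1 hj)]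

theorem card_ssyt_le (hla : Antitone l) :
    #{T : Fin n → Fin k → Fin n | IsSSYT l T} ≤ (k + 1) ^ (n * (n - 1) / 2) := by
  let code (T : Fin n → Fin k → Fin n) (p : {p : Fin n × Fin n // p.1 < p.2}) : Fin (k + 1) :=
    ⟨rowCountLT l T p.1.1 p.1.2, Nat.lt_succ_of_le ((card_filter_le _ _).trans_eq (card_fin k))⟩
  have hcode : Set.InjOn code {T | IsSSYT l T} := fun T hT T' hT' he =>
    IsSSYT.eq_of_rowCountLT_eq hla hT hT' fun i m him =>
      congrArg Fin.val (congrFun he ⟨(i, m), him⟩)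
  calc #{T : Fin n → Fin k → Fin n | IsSSYT l T}
      ≤ #(univ : Finset ({p : Fin n × Fin n // p.1 < p.2} → Fin (k + 1))) :=
        card_le_card_of_injOn code (fun _ _ => mem_coe.2 (mem_univ _)) (by simpa using hcode)
    _ = (k + 1) ^ (n * (n - 1) / 2) := by
        rw [Finset.card_univ, Fintype.card_fun, Fintype.card_fin, Fintype.card_subtype,
          ← univ_product_univ, card_product_filter_lt, Finset.card_univ, Fintype.card_fin,
          Nat.choose_two_right]

theorem schurR_le_card_ssyt_mul {x : Fin n → ℝ} (hxa : Antitone x) (hx0 : ∀ i, 0 ≤ x i)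
    (hla : Antitone l) (hlk : ∀ i, l i ≤ k) :
    schurR n k l x ≤ #{T : Fin n → Fin k → Fin n | IsSSYT l T} * ∏ i, x i ^ l i := by
  rw [schurR, ← sum_filter, ← nsmul_eq_mul, ← sum_const]
  refine sum_le_sum fun T hT => prod_le_prod (fun i _ => prod_nonneg fun j _ => hx0 _)
    fun i _ => ?_
  calc ∏ j ∈ univ.filter (fun j : Fin k => (j : ℕ) < l i), x (T i j)
      ≤ ∏ j ∈ univ.filter (fun j : Fin k => (j : ℕ) < l i), x i :=
        prod_le_prod (fun _ _ => hx0 _)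
          fun j hj => hxa ((mem_filter.1 hT).2.le_entry hla (mem_filter.1 hj).2)
    _ = x i ^ l i := by rw [prod_const, Fin.card_filter_val_lt, min_eq_right (hlk i)]

theorem prod_factorial_le_hookProd (l : Fin n → ℕ) : ∏ i, (l i)! ≤ hookProd n l :=
  prod_le_prod' fun i _ => by
    rw [← Nat.descFactorial_self, Nat.descFactorial_eq_prod_range]
    exact prod_le_prod' fun j _ => Nat.le_add_right _ _

end Tableaux

/-- Eigenvalue estimation: for nonincreasing nonnegative `x` with
`∑ xᵢ = τ > 0` and `λ` a partition of `k` with at most `n` parts, the Schur–Weyl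
distribution `SW_x^k(λ) = (k!/τᵏ) s_λ(x)/H_λ` satisfies
`SW_x^k(λ) ≤ (k+1)^{n(n−1)/2} exp(−k · D(λ/k ‖ x/τ))`. -/
theorem stmt19 {n k : ℕ} (x : Fin n → ℝ) (l : Fin n → ℕ)
    (hxa : Antitone x) (hx0 : ∀ i, 0 ≤ x i) (hτ : 0 < ∑ i, x i)
    (hla : Antitone l) (hlk : ∑ i, l i = k) :
    (k.factorial : ℝ) / (∑ i, x i) ^ k * (schurR n k l x / (hookProd n l : ℝ))
      ≤ (k + 1 : ℝ) ^ (n * (n - 1) / 2) *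
        Real.exp (-(k : ℝ) *
          ∑ i, ((l i : ℝ) / k) * Real.log (((l i : ℝ) / k) / (x i / ∑ j, x j))) := by
  set τ := ∑ i, x i
  set N := #{T : Fin n → Fin k → Fin n | IsSSYT l T}
  have hl_le : ∀ i, l i ≤ k := fun i =>
    hlk ▸ single_le_sum (fun _ _ => Nat.zero_le _) (mem_univ i)
  have hp : ∀ i, 0 ≤ x i / τ := fun i => div_nonneg (hx0 i) hτ.le
  have hP : 0 ≤ ∏ i, (x i / τ) ^ l i := prod_nonneg fun i _ => pow_nonneg (hp i) _
  have hhook : (∏ i, ((l i)! : ℝ)) ≤ hookProd n l := by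
    exact_mod_cast prod_factorial_le_hookProd l
  have hmult : (k ! : ℝ) / ∏ i, ((l i)! : ℝ) = Nat.multinomial univ l := by
    rw [div_eq_iff (by positivity), ← hlk, ← Nat.multinomial_spec]
    push_cast
    ring
  have hschur : schurR n k l x / τ ^ k ≤ N * ∏ i, (x i / τ) ^ l i := by
    rw [prod_congr rfl fun i _ => div_pow (x i) τ (l i), prod_div_distrib, prod_pow_eq_pow_sum,
      hlk, ← mul_div_assoc]
    exact div_le_div_of_nonneg_right (schurR_le_card_ssyt_mul hxa hx0 hla hl_le) (by positivity)
  calc (k ! : ℝ) / τ ^ k * (schurR n k l x / hookProd n l)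
      = k ! / hookProd n l * (schurR n k l x / τ ^ k) := by ring
    _ ≤ k ! / hookProd n l * (N * ∏ i, (x i / τ) ^ l i) :=
        mul_le_mul_of_nonneg_left hschur (by positivity)
    _ ≤ (k ! / ∏ i, ((l i)! : ℝ)) * (N * ∏ i, (x i / τ) ^ l i) :=
        mul_le_mul_of_nonneg_right
          (div_le_div_of_nonneg_left (by positivity) (by positivity) hhook)
          (mul_nonneg (Nat.cast_nonneg _) hP)
    _ = N * (Nat.multinomial univ l * ∏ i, (x i / τ) ^ l i) := by rw [hmult]; ring
    _ ≤ (k + 1 : ℝ) ^ (n * (n - 1) / 2) *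
          exp (-(k : ℝ) * ∑ i, ((l i : ℝ) / k) * log (((l i : ℝ) / k) / (x i / τ))) :=
        mul_le_mul (by exact_mod_cast card_ssyt_le hla)
          (multinomial_mul_prod_pow_le_exp_neg_klDiv l hlk hp)
          (mul_nonneg (Nat.cast_nonneg _) hP) (by positivity)
end
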